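/- For an adjunction F ⊣ G with unit η and counit ε, εF : FGF → F is an isomorphism if and only if ηG : G → GFG is an isomorphism. -/

import Mathlib

/-!
If `ε F` is invertible, so is `G ε F`, and both `η G F` and `G F η` are sections of it (by the two
triangle identities), hence `η G F = G F η`. Naturality of `η` then gives
`G ε_Y ≫ η_{GY} = G F (η_{GY} ≫ G ε_Y) = 𝟙`, so `G ε` is inverse to `η G`.
The converse is the same argument for the opposite adjunction `Gᵒᵖ ⊣ Fᵒᵖ`.
-/

open CategoryTheory

namespace CategoryTheory.Adjunction

variable {C D : Type*} [Category C] [Category D] {F : C ⥤ D} {G : D ⥤ C} (adj : F ⊣ G)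

lemma unit_app_obj_obj_eq_map_map_unit_app (X : C) [Mono (G.map (adj.counit.app (F.obj X)))] :
    adj.unit.app (G.obj (F.obj X)) = G.map (F.map (adj.unit.app X)) := by
  rw [← cancel_mono (G.map (adj.counit.app (F.obj X))), right_triangle_components,
    ← G.map_comp, adj.left_triangle_components X]
  exact (G.map_id _).symm

lemma isIso_unit_app_obj_of_isIso_counit_app_obj (Y : D)
    [IsIso (adj.counit.app (F.obj (G.obj Y)))] : IsIso (adj.unit.app (G.obj Y)) := by
  refine ⟨G.map (adj.counit.app Y), adj.right_triangle_components Y, ?_⟩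
  calc G.map (adj.counit.app Y) ≫ adj.unit.app (G.obj Y)
      = adj.unit.app (G.obj (F.obj (G.obj Y))) ≫ G.map (F.map (G.map (adj.counit.app Y))) :=
        (adj.unit_naturality _).symm
    _ = G.map (F.map (adj.unit.app (G.obj Y) ≫ G.map (adj.counit.app Y))) := by
        rw [unit_app_obj_obj_eq_map_map_unit_app, F.map_comp, G.map_comp]
    _ = 𝟙 _ := by simp

lemma isIso_counit_app_obj_of_isIso_unit_app_obj (X : C)
    [IsIso (adj.unit.app (G.obj (F.obj X)))] : IsIso (adj.counit.app (F.obj X)) := by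
  rw [← isIso_op_iff]
  have : IsIso (adj.op.counit.app (G.op.obj (F.op.obj (.op X)))) :=
    (isIso_op_iff _).mpr ‹IsIso (adj.unit.app (G.obj (F.obj X)))›
  exact adj.op.isIso_unit_app_obj_of_isIso_counit_app_obj (.op X)

end CategoryTheory.Adjunction

theorem stmt_15 {A B : Type*} [Category A] [Category B] (F : A ⥤ B) (G : B ⥤ A)
    (adj : F ⊣ G) :
    (∀ (X : A), IsIso (adj.counit.app (F.obj X))) ↔
    (∀ (Y : B), IsIso (adj.unit.app (G.obj Y))) :=
  ⟨fun _ Y => adj.isIso_unit_app_obj_of_isIso_counit_app_obj Y,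
    fun _ X => adj.isIso_counit_app_obj_of_isIso_unit_app_obj X⟩
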